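/- Let μ ≥ 0, g be μ-strongly convex proper closed, λ > 0, and (x, v, z) ∈ ℝ^d × ℝ^d × ℝ^d. If w ∈ ℝ^d satisfies v - μx + μw ∈ ∂g(w), then PD_{(λ/(1+λμ)) g_μ}(x, v - μx; z/(1+λμ)) = (1/(2(1+λμ)²))‖x - z + λv‖² + (λ/(1+λμ))( g(x) - g(w) + (μ/2)‖x - w‖² - ⟨x - w, v⟩ ), where g_μ(·) = g(·) - (μ/2)‖·‖². -/

import Mathlib

/-!
Since `g - (μ/2)‖·‖²` is convex, the condition `v - μx + μw ∈ ∂g(w)` upgrades to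
`v - μx ∈ ∂g_μ(w)`: along the segment from `w` to `u` the quadratic error is of order `t²`
while convexity gains order `t`. Fenchel–Young equality then evaluates the conjugate,
`g_μ*(v - μx) = ⟪v - μx, w⟫ - g_μ(w)`, and what remains of the gap is an algebraic identity
in inner products.
-/

open RealInnerProductSpace Set Filter Topology

lemma nonneg_of_forall_neg_mul_le {a c : ℝ} (h : ∀ t ∈ Ioc (0 : ℝ) 1, -(c * t) ≤ a) : 0 ≤ a := by
  have hlim : Tendsto (fun t : ℝ => -(c * t)) (𝓝[>] 0) (𝓝 0) := by
    have : Tendsto (fun t : ℝ => -(c * t)) (𝓝 0) (𝓝 (-(c * 0))) :=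
      ((continuous_const.mul continuous_id).neg).tendsto 0
    simpa using this.mono_left nhdsWithin_le_nhds
  exact le_of_tendsto hlim (eventually_of_mem (Ioc_mem_nhdsGT zero_lt_one) h)

variable {E : Type*} [NormedAddCommGroup E] [InnerProductSpace ℝ E]

lemma ConvexOn.subgradient_of_subgradient_sub_sq {f : E → ℝ} (hf : ConvexOn ℝ univ f)
    {w s : E} {c : ℝ} (h : ∀ u, f w + ⟪s, u - w⟫ - c * ‖u - w‖ ^ 2 ≤ f u) (u : E) :
    f w + ⟪s, u - w⟫ ≤ f u := by
  suffices 0 ≤ f u - f w - ⟪s, u - w⟫ by linarith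
  refine nonneg_of_forall_neg_mul_le (c := c * ‖u - w‖ ^ 2) fun t ⟨ht0, ht1⟩ => ?_
  have hconv : f ((1 - t) • w + t • u) ≤ (1 - t) * f w + t * f u :=
    hf.2 (mem_univ w) (mem_univ u) (by linarith) ht0.le (by ring)
  have hseg : (1 - t) • w + t • u - w = t • (u - w) := by module
  have happrox := h ((1 - t) • w + t • u)
  rw [hseg, inner_smul_right, norm_smul, mul_pow, Real.norm_of_nonneg ht0.le] at happrox
  have : t * (-(c * ‖u - w‖ ^ 2 * t)) ≤ t * (f u - f w - ⟪s, u - w⟫) := by nlinarith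
  exact le_of_mul_le_mul_left this ht0

lemma subgradient_sub_half_sq {g : E → ℝ} {μ : ℝ}
    (hg : ConvexOn ℝ univ (fun u => g u - μ / 2 * ‖u‖ ^ 2)) {w s : E}
    (hw : ∀ u, g w + ⟪s + μ • w, u - w⟫ ≤ g u) (u : E) :
    g w - μ / 2 * ‖w‖ ^ 2 + ⟪s, u - w⟫ ≤ g u - μ / 2 * ‖u‖ ^ 2 := by
  refine hg.subgradient_of_subgradient_sub_sq (c := μ / 2) (fun y => ?_) u
  have hsq : ‖y‖ ^ 2 = ‖w‖ ^ 2 + 2 * ⟪w, y - w⟫ + ‖y - w‖ ^ 2 := by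
    simpa using norm_add_sq_real w (y - w)
  have := hw y
  rw [inner_add_left, real_inner_smul_left] at this
  rw [hsq]; linarith

lemma isGreatest_conjugate_of_subgradient {f : E → ℝ} {w s : E}
    (hs : ∀ y, f w + ⟪s, y - w⟫ ≤ f y) :
    IsGreatest {r : ℝ | ∃ y, r = ⟪s, y⟫ - f y} (⟪s, w⟫ - f w) := by
  refine ⟨⟨w, rfl⟩, ?_⟩
  rintro r ⟨y, rfl⟩
  have := hs y
  rw [inner_sub_right] at this
  linarith

theorem pd_gap_strongly_convex {d : ℕ} (μ : ℝ) (hμ : 0 ≤ μ)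
    (g gmustar : EuclideanSpace ℝ (Fin d) → ℝ)
    (hg : ConvexOn ℝ Set.univ (fun u => g u - μ / 2 * ‖u‖ ^ 2))
    (hstar : ∀ u, IsLUB {r : ℝ | ∃ y, r = ⟪u, y⟫ - (g y - μ / 2 * ‖y‖ ^ 2)} (gmustar u))
    (lam : ℝ) (hlam : 0 < lam) (x v z w : EuclideanSpace ℝ (Fin d))
    (hw : ∀ u, g w + ⟪v - μ • x + μ • w, u - w⟫ ≤ g u) :
    (lam / (1 + lam * μ)) * (g x - μ / 2 * ‖x‖ ^ 2) + ‖x - (1 + lam * μ)⁻¹ • z‖ ^ 2 / 2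
      - (-((lam / (1 + lam * μ)) * gmustar (v - μ • x))
          - ‖(1 + lam * μ)⁻¹ • z - (lam / (1 + lam * μ)) • (v - μ • x)‖ ^ 2 / 2
          + ‖(1 + lam * μ)⁻¹ • z‖ ^ 2 / 2) =
    1 / (2 * (1 + lam * μ) ^ 2) * ‖x - z + lam • v‖ ^ 2
      + lam / (1 + lam * μ) * (g x - g w + μ / 2 * ‖x - w‖ ^ 2 - ⟪x - w, v⟫) := by
  have hconj : gmustar (v - μ • x) = ⟪v - μ • x, w⟫ - (g w - μ / 2 * ‖w‖ ^ 2) :=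
    (hstar _).unique (isGreatest_conjugate_of_subgradient
      (subgradient_sub_half_sq hg hw)).isLUB
  have hscale : 1 + lam * μ ≠ 0 := by positivity
  rw [hconj]
  simp only [← real_inner_self_eq_norm_sq, inner_sub_left, inner_sub_right,
    inner_add_left, inner_add_right, real_inner_smul_left, real_inner_smul_right,
    real_inner_comm w v, real_inner_comm w x, real_inner_comm z x, real_inner_comm v x,
    real_inner_comm z v]
  field_simp
  ring
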